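/- arXiv:1204.0698 — 2 statements merged into one kernel-verified Lean document; each statement's English description precedes it below -/
import Mathlib

section
/- Let f ∈ 𝒜, c ∈ ℂ and κ ∈ ℂ with κ ∉ {0, −1, −2, …}. Then for all z ∈ 𝕌 the recurrence identity z·(B_{κ+1}^c f)′(z) = κ·B_κ^c f(z) − (κ−1)·B_{κ+1}^c f(z) holds. -/
open Complex Metric Set

noncomputable section

/-- The open unit disk 𝕌. -/
def unitDisk : Set ℂ := Metric.ball (0 : ℂ) 1

/-- The class 𝒜 of normalized analytic functions on 𝕌. -/
def InA (f : ℂ → ℂ) : Prop :=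
  DifferentiableOn ℂ f unitDisk ∧ f 0 = 0 ∧ deriv f 0 = 1

/-- ℋ_0 : analytic on 𝕌 with value 0 at the origin. -/
def InH0 (q : ℂ → ℂ) : Prop := DifferentiableOn ℂ q unitDisk ∧ q 0 = 0

/-- ℋ_1 : analytic on 𝕌 with value 1 at the origin. -/
def InH1 (q : ℂ → ℂ) : Prop := DifferentiableOn ℂ q unitDisk ∧ q 0 = 1

/-- Univalent (analytic and injective) on 𝕌. -/
def Univalent (h : ℂ → ℂ) : Prop :=
  DifferentiableOn ℂ h unitDisk ∧ Set.InjOn h unitDisk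

/-- The coefficient (−c)^n / (4^n (κ)_n n!). -/
def besselCoeff (c κ : ℂ) (n : ℕ) : ℂ :=
  (-c) ^ n / ((4 : ℂ) ^ n * (ascPochhammer ℂ n).eval κ * (n.factorial : ℂ))

/-- The n-th Taylor coefficient of f at 0. -/
def taylorCoeff (f : ℂ → ℂ) (n : ℕ) : ℂ := iteratedDeriv n f 0 / (n.factorial : ℂ)

/-- φ_{κ,c} : the normalized generalized Bessel function of the first kind. -/
def genBessel (κ c : ℂ) (z : ℂ) : ℂ := ∑' n : ℕ, besselCoeff c κ n * z ^ (n + 1)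

/-- The operator B_κ^c, the Hadamard product of φ_{κ,c} with f. -/
def besselOp (c κ : ℂ) (f : ℂ → ℂ) (z : ℂ) : ℂ :=
  ∑' n : ℕ, besselCoeff c κ n * taylorCoeff f (n + 1) * z ^ (n + 1)

/-- Subordination f ≺ F on the unit disk. -/
def Subordinate (f F : ℂ → ℂ) : Prop :=
  ∃ w : ℂ → ℂ, DifferentiableOn ℂ w unitDisk ∧ w 0 = 0 ∧
    Set.MapsTo w unitDisk unitDisk ∧ ∀ z ∈ unitDisk, f z = F (w z)

/-- E(q) : boundary points where q blows up. -/
def Eset (q : ℂ → ℂ) : Set ℂ :=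
  {ζ | ζ ∈ Metric.sphere (0 : ℂ) 1 ∧
    Filter.Tendsto q (nhdsWithin ζ unitDisk) (Bornology.cobounded ℂ)}

/-- The class 𝒬. -/
def InQ (q : ℂ → ℂ) : Prop :=
  AnalyticOnNhd ℂ q (Metric.closedBall (0 : ℂ) 1 \ Eset q) ∧
  Set.InjOn q (Metric.closedBall (0 : ℂ) 1 \ Eset q) ∧
  ∀ ζ ∈ Metric.sphere (0 : ℂ) 1 \ Eset q, deriv q ζ ≠ 0

def InQ0 (q : ℂ → ℂ) : Prop := InQ q ∧ q 0 = 0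

def InQ1 (q : ℂ → ℂ) : Prop := InQ q ∧ q 0 = 1

/-- The admissibility class Φ_H[Ω,q] (Definition 2.1), with parameter κ. -/
def PhiH (κ : ℂ) (Ω : Set ℂ) (q : ℂ → ℂ) (φ : ℂ → ℂ → ℂ → ℂ → ℂ) : Prop :=
  ∀ z ∈ unitDisk, ∀ ζ ∈ Metric.sphere (0 : ℂ) 1 \ Eset q, ∀ k : ℝ, 1 ≤ k →
    ∀ u v w : ℂ, u = q ζ →
      v = ((k : ℂ) * ζ * deriv q ζ + (κ - 1) * q ζ) / κ →
      ((κ * (κ - 1) * w - (κ - 2) * (κ - 1) * u) / (κ * v - (κ - 1) * u) -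
          (2 * κ - 3)).re ≥ k * (ζ * deriv (deriv q) ζ / deriv q ζ + 1).re →
      φ u v w z ∉ Ω

/-- The admissibility class Φ_{H,1}[Ω,q] (Definition 2.3), with parameter κ. -/
def PhiH1 (κ : ℂ) (Ω : Set ℂ) (q : ℂ → ℂ) (φ : ℂ → ℂ → ℂ → ℂ → ℂ) : Prop :=
  ∀ z ∈ unitDisk, ∀ ζ ∈ Metric.sphere (0 : ℂ) 1 \ Eset q, q ζ ≠ 0 → ∀ k : ℝ, 1 ≤ k →
    ∀ u v w : ℂ, u = q ζ →
      v = (1 / (κ - 1)) * ((k : ℂ) * ζ * deriv q ζ / q ζ + κ * q ζ - 1) →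
      ((κ - 1) * v * ((κ - 1) * (w - v) + 1 - w) / ((κ - 1) * v + 1 - κ * u) -
          (2 * κ * u - 1 - (κ - 1) * v)).re ≥
        k * (ζ * deriv (deriv q) ζ / deriv q ζ + 1).re →
      φ u v w z ∉ Ω

/-- The admissibility class Φ_{H,2}[Ω,q] (Definition 2.5), with parameter κ. -/
def PhiH2 (κ : ℂ) (Ω : Set ℂ) (q : ℂ → ℂ) (φ : ℂ → ℂ → ℂ → ℂ → ℂ) : Prop :=
  ∀ z ∈ unitDisk, ∀ ζ ∈ Metric.sphere (0 : ℂ) 1 \ Eset q, ∀ k : ℝ, 1 ≤ k →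
    ∀ u v w : ℂ, u = q ζ →
      v = ((k : ℂ) * ζ * deriv q ζ + κ * q ζ) / κ →
      ((κ - 1) * (w - u) / (v - u) + (1 - 2 * κ)).re ≥
        k * (ζ * deriv (deriv q) ζ / deriv q ζ + 1).re →
      φ u v w z ∉ Ω

/-- The admissibility class Φ_H[Ω,M] (Definition 2.2), with parameter κ. -/
def PhiHM (κ : ℂ) (Ω : Set ℂ) (M : ℝ) (φ : ℂ → ℂ → ℂ → ℂ → ℂ) : Prop :=
  ∀ z ∈ unitDisk, ∀ θ : ℝ, ∀ k : ℝ, 1 ≤ k → ∀ L : ℂ,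
    (L * Complex.exp (-(θ : ℂ) * Complex.I)).re ≥ (k - 1) * k * M →
    φ ((M : ℂ) * Complex.exp ((θ : ℂ) * Complex.I))
      (((k : ℂ) + κ - 1) / κ * (M : ℂ) * Complex.exp ((θ : ℂ) * Complex.I))
      ((L + (κ - 1) * (2 * (k : ℂ) + κ - 2) * (M : ℂ) * Complex.exp ((θ : ℂ) * Complex.I)) /
        (κ * (κ - 1))) z ∉ Ω

/-- The admissibility class Φ′_H[Ω,q] (Definition 3.1), with parameter κ. -/
def PhiH' (κ : ℂ) (Ω : Set ℂ) (q : ℂ → ℂ) (φ : ℂ → ℂ → ℂ → ℂ → ℂ) : Prop :=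
  ∀ z ∈ unitDisk, ∀ ς ∈ Metric.sphere (0 : ℂ) 1, ∀ m : ℝ, 1 ≤ m →
    ∀ u v w : ℂ, u = q z →
      v = (z * deriv q z + (m : ℂ) * (κ - 1) * q z) / ((m : ℂ) * κ) →
      ((κ * (κ - 1) * w - (κ - 2) * (κ - 1) * u) / (κ * v - (κ - 1) * u) -
          (2 * κ - 3)).re ≤ (1 / m) * (z * deriv (deriv q) z / deriv q z + 1).re →
      φ u v w ς ∈ Ω

/-- The quotient g/h extended analytically with value 1 at the origin. -/
def ratio (g h : ℂ → ℂ) (z : ℂ) : ℂ := if z = 0 then 1 else g z / h z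

/-- The quotient g(z)/z extended analytically with value 1 at the origin. -/
def divZ (g : ℂ → ℂ) (z : ℂ) : ℂ := if z = 0 then 1 else g z / z

/-- z ↦ φ(B_{κ+1}^c f(z), B_κ^c f(z), B_{κ−1}^c f(z); z). -/
def opPhi (c κ : ℂ) (φ : ℂ → ℂ → ℂ → ℂ → ℂ) (f : ℂ → ℂ) (z : ℂ) : ℂ :=
  φ (besselOp c (κ + 1) f z) (besselOp c κ f z) (besselOp c (κ - 1) f z) z


/-! The recurrence is an identity between Taylor coefficients: from
`(κ)ₙ₊₁ = κ (κ + 1)ₙ = (κ)ₙ (κ + n)` one gets `κ b_κ(n) = (κ + n) b_{κ+1}(n)` for the Bessel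
coefficients, and `(n + 1) = (κ + n) - (κ - 1)` turns this into the stated identity once
`B_{κ+1}^c f` is differentiated termwise. Termwise differentiation on `𝕌` is legitimate because
the Bessel coefficients are bounded (`(κ)ₙ` stays away from `0`) while the Taylor coefficients of
`f` are `O(t⁻ⁿ)` for every `t < 1` by Cauchy's estimates. -/

theorem add_one_ne_neg_natCast {κ : ℂ} (hκ : ∀ n : ℕ, κ ≠ -(n : ℂ)) (n : ℕ) :
    κ + 1 ≠ -(n : ℂ) := fun h => hκ (n + 1) (by push_cast; linear_combination h)

theorem ascPochhammer_eval_ne_zero {κ : ℂ} (hκ : ∀ n : ℕ, κ ≠ -(n : ℂ)) (n : ℕ) :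
    (ascPochhammer ℂ n).eval κ ≠ 0 := by
  rw [Ne, ascPochhammer_eval_eq_zero_iff]
  rintro ⟨k, -, hk⟩
  exact hκ k (by rw [hk, neg_neg])

theorem mul_ascPochhammer_eval_add_one {R : Type*} [CommRing R] (x : R) (n : ℕ) :
    x * (ascPochhammer R n).eval (x + 1) = (ascPochhammer R n).eval x * (x + n) := by
  rw [← ascPochhammer_succ_eval, ascPochhammer_succ_left]
  simp [Polynomial.eval_comp]

/-- Past `N > ‖κ‖`, `‖(κ)ₙ‖` is nondecreasing, so its minimum over `n ≤ N` is a lower bound. -/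
theorem exists_pos_le_norm_ascPochhammer_eval {κ : ℂ} (hκ : ∀ n : ℕ, κ ≠ -(n : ℂ)) :
    ∃ ε > 0, ∀ n, ε ≤ ‖(ascPochhammer ℂ n).eval κ‖ := by
  set N := ⌈‖κ‖⌉₊ + 1
  obtain ⟨n₀, -, hmin⟩ := (Finset.range (N + 1)).exists_min_image
    (fun n => ‖(ascPochhammer ℂ n).eval κ‖) ⟨0, by simp⟩
  refine ⟨_, norm_pos_iff.2 (ascPochhammer_eval_ne_zero hκ n₀), fun n => ?_⟩
  induction n with
  | zero => exact hmin 0 (by simp)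
  | succ n ih =>
    rcases le_or_gt (n + 1) N with hn | hn
    · exact hmin _ (Finset.mem_range.2 (by omega))
    · have hfactor : 1 ≤ ‖κ + n‖ := by
        have hN : (N : ℝ) ≤ n := by exact_mod_cast Nat.lt_succ_iff.1 hn
        have := norm_sub_le (κ + n) κ
        simp only [add_sub_cancel_left, Complex.norm_natCast] at this
        push_cast [N] at hN
        linarith [Nat.le_ceil ‖κ‖]
      rw [ascPochhammer_succ_eval, norm_mul]
      exact ih.trans (le_mul_of_one_le_right (norm_nonneg _) hfactor)

theorem mul_besselCoeff (c : ℂ) {κ : ℂ} (hκ : ∀ n : ℕ, κ ≠ -(n : ℂ)) (n : ℕ) :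
    κ * besselCoeff c κ n = (κ + n) * besselCoeff c (κ + 1) n := by
  have hP := ascPochhammer_eval_ne_zero hκ n
  have hP₁ := ascPochhammer_eval_ne_zero (add_one_ne_neg_natCast hκ) n
  have hfac : (n.factorial : ℂ) ≠ 0 := by exact_mod_cast n.factorial_ne_zero
  rw [besselCoeff, besselCoeff]
  field_simp
  linear_combination (-c) ^ n * mul_ascPochhammer_eval_add_one κ n

theorem exists_norm_besselCoeff_le (c : ℂ) {κ : ℂ} (hκ : ∀ n : ℕ, κ ≠ -(n : ℂ)) :
    ∃ B, ∀ n, ‖besselCoeff c κ n‖ ≤ B := by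
  obtain ⟨ε, hε, hle⟩ := exists_pos_le_norm_ascPochhammer_eval hκ
  refine ⟨Real.exp (‖c‖ / 4) / ε, fun n => ?_⟩
  calc ‖besselCoeff c κ n‖ = (‖c‖ / 4) ^ n / n.factorial / ‖(ascPochhammer ℂ n).eval κ‖ := by
        simp only [besselCoeff, norm_div, norm_mul, norm_pow, norm_neg, Complex.norm_natCast,
          Complex.norm_ofNat, div_pow]
        ring
    _ ≤ Real.exp (‖c‖ / 4) / ε := by
        gcongr
        · exact Real.pow_div_factorial_le_exp _ (by positivity) n
        · exact hle n

theorem exists_norm_taylorCoeff_mul_pow_le {f : ℂ → ℂ} {R : ℝ} (hR : 0 < R)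
    (hf : DiffContOnCl ℂ f (ball 0 R)) : ∃ C, ∀ m, ‖taylorCoeff f m‖ * R ^ m ≤ C := by
  obtain ⟨C, hC⟩ := (isCompact_sphere (0 : ℂ) R).exists_bound_of_continuousOn
    (hf.continuousOn_ball.mono sphere_subset_closedBall)
  refine ⟨C, fun m => ?_⟩
  have hcauchy := Complex.norm_iteratedDeriv_le_of_forall_mem_sphere_norm_le m hR hf hC
  have hfac : (0 : ℝ) < m.factorial := by exact_mod_cast m.factorial_pos
  rw [taylorCoeff, norm_div, Complex.norm_natCast]
  rw [le_div_iff₀ (by positivity)] at hcauchy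
  calc ‖iteratedDeriv m f 0‖ / m.factorial * R ^ m
      = ‖iteratedDeriv m f 0‖ * R ^ m / m.factorial := by ring
    _ ≤ C := by rw [div_le_iff₀ hfac]; linarith

section PowerSeries

variable {a : ℕ → ℂ}

theorem summable_norm_mul_succ_mul_pow
    (ha : ∀ t : ℝ, 0 < t → t < 1 → ∃ C, ∀ n, ‖a n‖ * t ^ n ≤ C) {r : ℝ} (hr0 : 0 ≤ r)
    (hr1 : r < 1) : Summable fun n : ℕ => ‖a n‖ * ((n + 1) * r ^ n) := by
  obtain ⟨t, hrt, ht1⟩ := exists_between hr1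
  have ht : 0 < t := hr0.trans_lt hrt
  obtain ⟨C, hC⟩ := ha t ht ht1
  have hq : ‖r / t‖ < 1 := by
    rwa [Real.norm_of_nonneg (by positivity), div_lt_one ht]
  have hgeom : Summable fun n : ℕ => C * ((n : ℝ) ^ 1 * (r / t) ^ n + (r / t) ^ n) :=
    ((summable_pow_mul_geometric_of_norm_lt_one 1 hq).add
      (summable_geometric_of_norm_lt_one hq)).mul_left C
  refine hgeom.of_nonneg_of_le (fun n => by positivity) fun n => ?_
  calc ‖a n‖ * ((n + 1) * r ^ n) = ‖a n‖ * t ^ n * ((n + 1) * (r / t) ^ n) := by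
        rw [div_pow]
        field_simp
    _ ≤ C * ((n + 1) * (r / t) ^ n) := by gcongr; exact hC n
    _ = C * ((n : ℝ) ^ 1 * (r / t) ^ n + (r / t) ^ n) := by ring

theorem summable_mul_pow_succ (ha : ∀ t : ℝ, 0 < t → t < 1 → ∃ C, ∀ n, ‖a n‖ * t ^ n ≤ C)
    {z : ℂ} (hz : ‖z‖ < 1) : Summable fun n => a n * z ^ (n + 1) := by
  refine .of_norm_bounded (summable_norm_mul_succ_mul_pow ha (norm_nonneg z) hz) fun n => ?_
  rw [norm_mul, norm_pow, pow_succ']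
  gcongr
  linarith [(Nat.cast_nonneg n : (0 : ℝ) ≤ n)]

theorem hasDerivAt_tsum_mul_pow_succ
    (ha : ∀ t : ℝ, 0 < t → t < 1 → ∃ C, ∀ n, ‖a n‖ * t ^ n ≤ C) {z : ℂ} (hz : ‖z‖ < 1) :
    HasDerivAt (fun y => ∑' n, a n * y ^ (n + 1)) (∑' n, a n * ((n + 1) * z ^ n)) z := by
  obtain ⟨r, hzr, hr1⟩ := exists_between hz
  have hz' : z ∈ ball (0 : ℂ) r := mem_ball_zero_iff.2 hzr
  refine hasDerivAt_tsum_of_isPreconnected (g := fun n y => a n * y ^ (n + 1))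
    (g' := fun n y => a n * ((n + 1) * y ^ n))
    (summable_norm_mul_succ_mul_pow ha ((norm_nonneg z).trans hzr.le) hr1) isOpen_ball
    (convex_ball 0 r).isPreconnected (fun n y _ => ?_) (fun n y hy => ?_) hz'
    (summable_mul_pow_succ ha hz) hz'
  · simpa [mul_comm, mul_assoc] using (hasDerivAt_pow (n + 1) y).const_mul (a n)
  · have hnorm : ‖(n : ℂ) + 1‖ = n + 1 := by exact_mod_cast Complex.norm_natCast (n + 1)
    rw [norm_mul, norm_mul, norm_pow, hnorm]
    gcongr
    exact (mem_ball_zero_iff.1 hy).le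

end PowerSeries

theorem exists_norm_besselCoeff_mul_taylorCoeff_mul_pow_le (c : ℂ) {κ : ℂ}
    (hκ : ∀ n : ℕ, κ ≠ -(n : ℂ)) {f : ℂ → ℂ} (hf : DifferentiableOn ℂ f unitDisk) (t : ℝ)
    (ht0 : 0 < t) (ht1 : t < 1) :
    ∃ C, ∀ n, ‖besselCoeff c κ n * taylorCoeff f (n + 1)‖ * t ^ n ≤ C := by
  obtain ⟨B, hB⟩ := exists_norm_besselCoeff_le c hκ
  obtain ⟨C, hC⟩ :=
    exists_norm_taylorCoeff_mul_pow_le ht0 (hf.diffContOnCl_ball (closedBall_subset_ball ht1))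
  refine ⟨B * (C / t), fun n => ?_⟩
  calc ‖besselCoeff c κ n * taylorCoeff f (n + 1)‖ * t ^ n
      = ‖besselCoeff c κ n‖ * (‖taylorCoeff f (n + 1)‖ * t ^ (n + 1) / t) := by
        rw [norm_mul, pow_succ]
        field_simp
    _ ≤ B * (C / t) := by
        gcongr
        · exact (norm_nonneg _).trans (hB 0)
        · exact hB n
        · exact hC (n + 1)

theorem summable_besselOp (c : ℂ) {κ : ℂ} (hκ : ∀ n : ℕ, κ ≠ -(n : ℂ)) {f : ℂ → ℂ}
    (hf : DifferentiableOn ℂ f unitDisk) {z : ℂ} (hz : z ∈ unitDisk) :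
    Summable fun n => besselCoeff c κ n * taylorCoeff f (n + 1) * z ^ (n + 1) :=
  summable_mul_pow_succ (exists_norm_besselCoeff_mul_taylorCoeff_mul_pow_le c hκ hf)
    (mem_ball_zero_iff.1 hz)

theorem hasDerivAt_besselOp (c : ℂ) {κ : ℂ} (hκ : ∀ n : ℕ, κ ≠ -(n : ℂ)) {f : ℂ → ℂ}
    (hf : DifferentiableOn ℂ f unitDisk) {z : ℂ} (hz : z ∈ unitDisk) :
    HasDerivAt (besselOp c κ f)
      (∑' n, besselCoeff c κ n * taylorCoeff f (n + 1) * ((n + 1) * z ^ n)) z :=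
  hasDerivAt_tsum_mul_pow_succ (exists_norm_besselCoeff_mul_taylorCoeff_mul_pow_le c hκ hf)
    (mem_ball_zero_iff.1 hz)

/-- Recurrence identity for the operator B_κ^c. -/
theorem bessel_op_recurrence (c κ : ℂ) (hκ : ∀ n : ℕ, κ ≠ -(n : ℂ))
    (f : ℂ → ℂ) (hf : InA f) :
    ∀ z ∈ unitDisk,
      z * deriv (besselOp c (κ + 1) f) z =
        κ * besselOp c κ f z - (κ - 1) * besselOp c (κ + 1) f z := by
  intro z hz
  have hκ₁ := add_one_ne_neg_natCast hκ
  calc z * deriv (besselOp c (κ + 1) f) z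
      = ∑' n : ℕ, z * (besselCoeff c (κ + 1) n * taylorCoeff f (n + 1) * ((n + 1) * z ^ n)) := by
        rw [(hasDerivAt_besselOp c hκ₁ hf.1 hz).deriv, tsum_mul_left]
    _ = ∑' n : ℕ, (κ * (besselCoeff c κ n * taylorCoeff f (n + 1) * z ^ (n + 1)) -
          (κ - 1) * (besselCoeff c (κ + 1) n * taylorCoeff f (n + 1) * z ^ (n + 1))) :=
        tsum_congr fun n => by
          linear_combination (-(taylorCoeff f (n + 1) * z ^ (n + 1))) * mul_besselCoeff c hκ n
    _ = κ * besselOp c κ f z - (κ - 1) * besselOp c (κ + 1) f z := by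
        rw [Summable.tsum_sub ((summable_besselOp c hκ hf.1 hz).mul_left κ)
          ((summable_besselOp c hκ₁ hf.1 hz).mul_left (κ - 1)), tsum_mul_left, tsum_mul_left]
        rfl

end
end

section
/- (Consequence (2.111), generalizing a result of Prajapat) Let c ∈ ℂ, let κ ∈ ℂ with Re(κ) ≥ 0 and κ ≠ 0, and let M > 0. If |φ_{κ,c}(z)| < M for all z ∈ 𝕌, then |φ_{κ+1,c}(z)| < M for all z ∈ 𝕌. -/
open Complex Metric Set

noncomputable section

/-!
Write `φ_{κ,c}(z) = z Q(z)` and `φ_{κ+1,c}(z) = z q(z)` with `q, Q` entire. The identity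
`κ (κ)_n⁻¹ = (κ + n) (κ + 1)_n⁻¹` between the coefficients says `Q = q + z q' / κ`, and the
Schwarz lemma turns `|z Q(z)| < M` into `|Q| ≤ M` on `𝕌`. If `|q|` attains its maximum over a
disk `|z| ≤ r` at `z₀`, then `z₀ q'(z₀) = k q(z₀)` with `k ≥ 0` (a form of Jack's lemma: at `z₀`
the angular derivative of `|q|²` vanishes and the inward radial one is nonpositive), so
`Q(z₀) = q(z₀) (1 + k / κ)` with `|1 + k / κ| ≥ 1` because `Re κ ≥ 0`. Hence `|q| ≤ M` on `𝕌`,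
and `|φ_{κ+1,c}(z)| = |z| |q(z)| < M`.
-/

open ComplexConjugate

section PowerSeries

variable {a : ℕ → ℂ}

theorem summable_mul_pow (ha : ∀ R : ℝ, Summable fun n => ‖a n‖ * R ^ n) (z : ℂ) :
    Summable fun n => a n * z ^ n :=
  (ha ‖z‖).of_norm_bounded fun n => by rw [norm_mul, norm_pow]

theorem natCast_mul_pow_le_two_mul_pow (n : ℕ) {x : ℝ} (hx : 0 ≤ x) :
    n * x ^ n ≤ (2 * x) ^ n := by
  rw [mul_pow]
  gcongr
  exact_mod_cast Nat.lt_two_pow_self.le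

theorem summable_natCast_mul_mul_pow (ha : ∀ R : ℝ, Summable fun n => ‖a n‖ * R ^ n) (z : ℂ) :
    Summable fun n => n * a n * z ^ n :=
  (ha (2 * ‖z‖)).of_norm_bounded fun n => by
    rw [norm_mul, norm_mul, norm_pow, Complex.norm_natCast, mul_comm _ ‖a n‖, mul_assoc]
    gcongr
    exact natCast_mul_pow_le_two_mul_pow n (norm_nonneg z)

theorem hasDerivAt_tsum_mul_pow (ha : ∀ R : ℝ, Summable fun n => ‖a n‖ * R ^ n) (z : ℂ) :
    HasDerivAt (fun w => ∑' n, a n * w ^ n) (∑' n, a n * (n * z ^ (n - 1))) z := by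
  set R := ‖z‖ + 1
  have hR : 1 ≤ R := by simp [R]
  refine hasDerivAt_tsum_of_isPreconnected (ha (2 * R)) isOpen_ball
    (convex_ball (0 : ℂ) R).isPreconnected (fun n w _ => (hasDerivAt_pow n w).const_mul (a n))
    (fun n w hw => ?_) (mem_ball_self (by linarith))
    (summable_mul_pow ha 0) (by simp [R])
  rw [norm_mul, norm_mul, norm_pow, Complex.norm_natCast]
  gcongr ‖a n‖ * ?_
  calc (n : ℝ) * ‖w‖ ^ (n - 1) ≤ n * R ^ n := by
        gcongr
        exact (pow_le_pow_left₀ (norm_nonneg w) (mem_ball_zero_iff.mp hw).le _).trans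
          (pow_le_pow_right₀ hR (Nat.sub_le n 1))
    _ ≤ (2 * R) ^ n := natCast_mul_pow_le_two_mul_pow n (by linarith)

theorem differentiable_tsum_mul_pow (ha : ∀ R : ℝ, Summable fun n => ‖a n‖ * R ^ n) :
    Differentiable ℂ fun w => ∑' n, a n * w ^ n :=
  fun z => (hasDerivAt_tsum_mul_pow ha z).differentiableAt

theorem mul_deriv_tsum_mul_pow (ha : ∀ R : ℝ, Summable fun n => ‖a n‖ * R ^ n) (z : ℂ) :
    z * deriv (fun w => ∑' n, a n * w ^ n) z = ∑' n, n * a n * z ^ n := by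
  rw [(hasDerivAt_tsum_mul_pow ha z).deriv, ← tsum_mul_left]
  congr 1
  ext (_ | n)
  · simp
  · simp only [Nat.add_sub_cancel, Nat.cast_succ, pow_succ]
    ring

theorem tsum_mul_pow_eq_add_mul_deriv_div {b : ℕ → ℂ} {κ : ℂ} (hκ : κ ≠ 0)
    (hb : ∀ R : ℝ, Summable fun n => ‖b n‖ * R ^ n) (hab : ∀ n : ℕ, κ * a n = (κ + n) * b n)
    (z : ℂ) :
    ∑' n, a n * z ^ n = (∑' n, b n * z ^ n) + z * deriv (fun w => ∑' n, b n * w ^ n) z / κ := by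
  have hsplit : ∀ n : ℕ, a n * z ^ n = b n * z ^ n + n * b n * z ^ n / κ := fun n => by
    field_simp
    linear_combination z ^ n * hab n
  simp_rw [hsplit]
  rw [mul_deriv_tsum_mul_pow hb, ← tsum_div_const,
    (summable_mul_pow hb z).tsum_add
      ((summable_natCast_mul_mul_pow hb z).div_const κ)]

end PowerSeries

theorem norm_le_of_forall_norm_mul_le {g : ℂ → ℂ} {M : ℝ} (hg : DifferentiableOn ℂ g (ball 0 1))
    (hM : ∀ z ∈ ball (0 : ℂ) 1, ‖z * g z‖ ≤ M) {z : ℂ} (hz : z ∈ ball (0 : ℂ) 1) :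
    ‖g z‖ ≤ M := by
  have hdslope : dslope (fun w => w * g w) 0 z = g z := by
    rcases eq_or_ne z 0 with rfl | hz0
    · have hd : HasDerivAt (fun w => w * g w) (1 * g 0 + 0 * deriv g 0) 0 :=
        (hasDerivAt_id' 0).mul (hg.differentiableAt (isOpen_ball.mem_nhds hz)).hasDerivAt
      rw [dslope_same, hd.deriv]
      simp
    · rw [dslope_of_ne _ hz0, slope_def_field]
      simp [hz0]
  rw [← hdslope]
  simpa using Complex.norm_dslope_le_div_of_mapsTo_ball (f := fun w => w * g w)
    (differentiableOn_id.mul hg)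
    (fun w hw => by simpa using hM w hw) hz

theorem exists_nonneg_mul_eq_mul_deriv_of_isMaxOn {f : ℂ → ℂ} {z₀ : ℂ}
    (hf : DifferentiableAt ℂ f z₀) (hmax : IsMaxOn (‖f ·‖) (closedBall 0 ‖z₀‖) z₀)
    (h0 : f z₀ ≠ 0) : ∃ k : ℝ, 0 ≤ k ∧ z₀ * deriv f z₀ = k * f z₀ := by
  set A := deriv f z₀ * conj (f z₀)
  obtain ⟨L, hF, hL⟩ : ∃ L : ℂ →L[ℝ] ℝ,
      HasFDerivAt (‖f ·‖ ^ 2) L z₀ ∧ ∀ v, L v = 2 * (v * A).re :=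
    ⟨_, (hf.hasDerivAt.hasFDerivAt.restrictScalars ℝ).norm_sq, fun v => by
      simp [A, Complex.inner, mul_assoc]⟩
  have hmax2 : IsMaxOn (‖f ·‖ ^ 2) (closedBall 0 ‖z₀‖) z₀ :=
    isMaxOn_iff.mpr fun w hw => pow_le_pow_left₀ (norm_nonneg _) (isMaxOn_iff.mp hmax w hw) 2
  have hz₀ : z₀ ∈ closedBall (0 : ℂ) ‖z₀‖ := by simp
  have hradial : 0 ≤ (z₀ * A).re := by
    have hin : -z₀ ∈ posTangentConeAt (closedBall (0 : ℂ) ‖z₀‖) z₀ :=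
      mem_posTangentConeAt_of_segment_subset
        ((convex_closedBall _ _).segment_subset hz₀ (by simp))
    have := hmax2.localize.hasFDerivWithinAt_nonpos hF.hasFDerivWithinAt hin
    rw [hL, neg_mul, Complex.neg_re] at this
    linarith
  have htangential : (z₀ * A).im = 0 := by
    have hγ : HasDerivAt (fun θ : ℝ => z₀ * Complex.exp (θ * I)) (z₀ * I) 0 := by
      simpa using (((hasDerivAt_id (0 : ℝ)).ofReal_comp.mul_const I).cexp.const_mul z₀)
    have hmaxγ : IsLocalMax ((‖f ·‖ ^ 2) ∘ fun θ : ℝ => z₀ * Complex.exp (θ * I)) 0 :=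
      Filter.Eventually.of_forall fun θ => by
        simpa using isMaxOn_iff.mp hmax2 (z₀ * Complex.exp (θ * I)) (by simp)
    have := hmaxγ.hasDerivAt_eq_zero (hF.comp_hasDerivAt_of_eq 0 hγ (by simp))
    rw [hL, mul_right_comm, Complex.mul_I_re] at this
    linarith
  refine ⟨(z₀ * A).re / ‖f z₀‖ ^ 2, by positivity, ?_⟩
  have hA : ((z₀ * A).re : ℂ) = z₀ * A := Complex.ext (by simp) (by simp [htangential])
  have hf0 : (‖f z₀‖ : ℂ) ^ 2 ≠ 0 := by simpa using h0
  rw [Complex.ofReal_div, hA, Complex.ofReal_pow, div_mul_eq_mul_div, eq_div_iff hf0,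
    ← Complex.mul_conj']
  simp only [A]
  ring

theorem one_le_norm_one_add_ofReal_div {κ : ℂ} (hκ : 0 ≤ κ.re) {k : ℝ} (hk : 0 ≤ k) :
    1 ≤ ‖1 + k / κ‖ := by
  rcases eq_or_ne κ 0 with rfl | hκ0
  · simp
  rw [one_add_div hκ0, norm_div, one_le_div (norm_pos_iff.mpr hκ0),
    ← sq_le_sq₀ (norm_nonneg _) (norm_nonneg _), Complex.sq_norm, Complex.sq_norm,
    Complex.normSq_apply, Complex.normSq_apply]
  simp only [Complex.add_re, Complex.add_im, Complex.ofReal_re, Complex.ofReal_im, add_zero]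
  nlinarith

theorem norm_le_of_norm_add_mul_deriv_div_le {q : ℂ → ℂ} {κ : ℂ} {M : ℝ} (hκ : 0 ≤ κ.re)
    (hq : DifferentiableOn ℂ q (ball 0 1))
    (hM : ∀ z ∈ ball (0 : ℂ) 1, ‖q z + z * deriv q z / κ‖ ≤ M) {z : ℂ}
    (hz : z ∈ ball (0 : ℂ) 1) : ‖q z‖ ≤ M := by
  have hsub : closedBall (0 : ℂ) ‖z‖ ⊆ ball 0 1 :=
    closedBall_subset_ball (mem_ball_zero_iff.mp hz)
  obtain ⟨z₀, hz₀, hmax⟩ := (isCompact_closedBall (0 : ℂ) ‖z‖).exists_isMaxOn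
    (nonempty_closedBall.mpr (norm_nonneg z)) (hq.continuousOn.mono hsub).norm
  have hqz : ‖q z‖ ≤ ‖q z₀‖ := isMaxOn_iff.mp hmax z (by simp)
  rcases eq_or_ne (q z₀) 0 with h0 | h0
  · rw [h0, norm_zero] at hqz
    exact hqz.trans ((norm_nonneg _).trans (hM z₀ (hsub hz₀)))
  obtain ⟨k, hk, hzk⟩ := exists_nonneg_mul_eq_mul_deriv_of_isMaxOn
    (hq.differentiableAt (isOpen_ball.mem_nhds (hsub hz₀)))
    (hmax.on_subset (closedBall_subset_closedBall (mem_closedBall_zero_iff.mp hz₀))) h0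
  calc ‖q z‖ ≤ ‖q z₀‖ := hqz
    _ ≤ ‖q z₀‖ * ‖1 + k / κ‖ :=
      le_mul_of_one_le_right (norm_nonneg _) (one_le_norm_one_add_ofReal_div hκ hk)
    _ = ‖q z₀ + z₀ * deriv q z₀ / κ‖ := by rw [← norm_mul, hzk]; ring_nf
    _ ≤ M := hM z₀ (hsub hz₀)

theorem add_natCast_ne_zero_of_re_nonneg {κ : ℂ} (hre : 0 ≤ κ.re) (h0 : κ ≠ 0) (j : ℕ) :
    κ + j ≠ 0 := by
  rcases Nat.eq_zero_or_pos j with rfl | hj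
  · simpa using h0
  · intro h
    have := congrArg Complex.re h
    simp only [Complex.add_re, Complex.natCast_re, Complex.zero_re] at this
    have : (0 : ℝ) < j := by exact_mod_cast hj
    linarith

-- No hypothesis on `κ` is needed: if `κ + n = 0` then `(κ)_{n+1} = 0` and both sides vanish.
theorem besselCoeff_succ (c κ : ℂ) (n : ℕ) :
    besselCoeff c κ (n + 1) = besselCoeff c κ n * (-c / (4 * (κ + n) * (n + 1))) := by
  simp only [besselCoeff, div_mul_div_comm, pow_succ, ascPochhammer_succ_eval,
    Nat.factorial_succ, Nat.cast_mul, Nat.cast_succ]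
  ring_nf

theorem summable_norm_besselCoeff_mul_pow (c κ : ℂ) (R : ℝ) :
    Summable fun n => ‖besselCoeff c κ n‖ * R ^ n := by
  refine summable_of_ratio_norm_eventually_le (r := 1 / 2) (by norm_num) ?_
  filter_upwards [Filter.eventually_ge_atTop ⌈‖κ‖ + ‖c‖ * |R|⌉₊] with n hn
  have hn' : ‖κ‖ + ‖c‖ * |R| ≤ n := Nat.ceil_le.mp hn
  have hκn : ‖c‖ * |R| ≤ ‖κ + n‖ := by
    have := norm_sub_le (κ + n) κ
    simp only [add_sub_cancel_left, Complex.norm_natCast] at this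
    linarith
  have hratio : ‖c‖ * |R| / (4 * ‖κ + n‖ * (n + 1)) ≤ 1 / 2 := by
    apply div_le_of_le_mul₀ (by positivity) (by norm_num)
    nlinarith [mul_nonneg (norm_nonneg (κ + n)) n.cast_nonneg, norm_nonneg (κ + n)]
  have hnorm : ‖besselCoeff c κ (n + 1)‖ =
      ‖besselCoeff c κ n‖ * (‖c‖ / (4 * ‖κ + n‖ * (n + 1))) := by
    have : ‖(n : ℂ) + 1‖ = n + 1 := by exact_mod_cast Complex.norm_natCast (n + 1)
    rw [besselCoeff_succ, norm_mul, norm_div, norm_neg, norm_mul, norm_mul, Complex.norm_ofNat,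
      this]
  simp only [norm_mul, norm_pow, Real.norm_eq_abs, abs_norm]
  calc ‖besselCoeff c κ (n + 1)‖ * |R| ^ (n + 1)
      = ‖besselCoeff c κ n‖ * |R| ^ n * (‖c‖ * |R| / (4 * ‖κ + n‖ * (n + 1))) := by
        rw [hnorm]; ring
    _ ≤ ‖besselCoeff c κ n‖ * |R| ^ n * (1 / 2) := by gcongr
    _ = 1 / 2 * (‖besselCoeff c κ n‖ * |R| ^ n) := by ring

theorem mul_besselCoeff_eq (c : ℂ) {κ : ℂ} (hκ : ∀ j : ℕ, κ + j ≠ 0) (n : ℕ) :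
    κ * besselCoeff c κ n = (κ + n) * besselCoeff c (κ + 1) n := by
  have hpoch : ∀ x : ℂ, (∀ j : ℕ, x + j ≠ 0) → (ascPochhammer ℂ n).eval x ≠ 0 :=
    fun x hx h => by
      obtain ⟨j, -, hj⟩ := (ascPochhammer_eval_eq_zero_iff n x).1 h
      exact hx j (by rw [hj]; ring)
  have hshift :
      (ascPochhammer ℂ n).eval κ * (κ + n) = κ * (ascPochhammer ℂ n).eval (κ + 1) := by
    rw [← ascPochhammer_succ_eval, ascPochhammer_succ_left]
    simp
  have h1 : (ascPochhammer ℂ n).eval κ ≠ 0 := hpoch κ hκ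
  have h2 : (ascPochhammer ℂ n).eval (κ + 1) ≠ 0 :=
    hpoch (κ + 1) fun j => by rw [add_assoc, add_comm 1]; exact_mod_cast hκ (j + 1)
  have hden : ∀ x : ℂ, (ascPochhammer ℂ n).eval x ≠ 0 →
      (4 : ℂ) ^ n * (ascPochhammer ℂ n).eval x * n.factorial ≠ 0 := fun x hx =>
    mul_ne_zero (mul_ne_zero (pow_ne_zero _ (by norm_num)) hx)
      (by exact_mod_cast n.factorial_ne_zero)
  unfold besselCoeff
  rw [mul_div_assoc', mul_div_assoc', div_eq_div_iff (hden κ h1) (hden (κ + 1) h2)]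
  linear_combination (-((-c) ^ n * 4 ^ n * n.factorial)) * hshift

theorem genBessel_eq_mul (κ c z : ℂ) :
    genBessel κ c z = z * ∑' n, besselCoeff c κ n * z ^ n := by
  rw [genBessel, ← tsum_mul_left]
  congr 1
  ext n
  ring

theorem genBessel_bound_general (c κ : ℂ) (hκre : 0 ≤ κ.re) (hκ0 : κ ≠ 0)
    (M : ℝ)
    (h : ∀ z ∈ unitDisk, ‖genBessel κ c z‖ < M) :
    ∀ z ∈ unitDisk, ‖genBessel (κ + 1) c z‖ < M := by
  set q : ℂ → ℂ := fun z => ∑' n, besselCoeff c (κ + 1) n * z ^ n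
  have hb := summable_norm_besselCoeff_mul_pow c (κ + 1)
  have hq : Differentiable ℂ q := differentiable_tsum_mul_pow hb
  have hQ : ∀ z ∈ ball (0 : ℂ) 1, ‖q z + z * deriv q z / κ‖ ≤ M := fun z hz => by
    rw [← tsum_mul_pow_eq_add_mul_deriv_div hκ0 hb
      (mul_besselCoeff_eq c (add_natCast_ne_zero_of_re_nonneg hκre hκ0))]
    refine norm_le_of_forall_norm_mul_le
      (differentiable_tsum_mul_pow (summable_norm_besselCoeff_mul_pow c κ)).differentiableOn
      (fun w hw => ?_) hz
    rw [← genBessel_eq_mul]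
    exact (h w hw).le
  intro z hz
  have hM : 0 < M := (norm_nonneg _).trans_lt (h 0 (mem_ball_self one_pos))
  calc ‖genBessel (κ + 1) c z‖ = ‖z‖ * ‖q z‖ := by rw [genBessel_eq_mul, norm_mul]
    _ ≤ ‖z‖ * M := by
      gcongr
      exact norm_le_of_norm_add_mul_deriv_div_le hκre hq.differentiableOn hQ hz
    _ < M := by
      have : ‖z‖ < 1 := mem_ball_zero_iff.mp hz
      nlinarith

/-- Consequence (2.111), generalizing a result of Prajapat. -/
theorem genBessel_bound (c κ : ℂ) (hκre : 0 ≤ κ.re) (hκ0 : κ ≠ 0)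
    (M : ℝ) (hM : 0 < M)
    (h : ∀ z ∈ unitDisk, ‖genBessel κ c z‖ < M) :
    ∀ z ∈ unitDisk, ‖genBessel (κ + 1) c z‖ < M :=
  genBessel_bound_general c κ hκre hκ0 M h
end
end
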